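/- Consider a picker who visits a sequence of locations s_1, ..., s_l with associated release times r(s_k), starting from the depot at time 0, where distances satisfy the triangle inequality. Define the 'CIOS' completion times by done*(s_1) = max(d(depot, s_1), r(s_1)) allowing anticipatory relocation, i.e., done*(s_{k+1}) = max(r(s_{k+1}), done*(s_k) + d(s_k, s_{k+1})); and define the 'no-relocation' completion times by done^A(s_1) = r(s_1) + d(depot, s_1) and done^A(s_{k+1}) = max(done^A(s_k), r(s_{k+1})) + d(s_k, s_{k+1}). Then for every k, done^A(s_k) − done*(s_k) ≤ D, where D is the maximum distance between any two locations (including the depot). In particular the final completion (makespan) loss from forgoing strategic relocation is at most D. -/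

import Mathlib

/-!
The gap `doneA k - doneStar k` can only change at a step through the next leg `δ = d (s k) (s (k+1))`:
if the picker without relocation waits for the release `r (k+1)`, its gap afterwards is at most `δ`,
since the anticipatory picker cannot finish before `r (k+1)`; otherwise both pickers just add `δ` and
the gap does not grow. So every gap is bounded by the previous gap or by one distance, hence by `D`.
-/

theorem max_add_sub_max_le {G : Type*} [AddCommGroup G] [LinearOrder G] [IsOrderedAddMonoid G]
    (a b r δ : G) : max a r + δ - max r (b + δ) ≤ max (a - b) δ := by
  rcases le_total r a with hra | har
  · calc max a r + δ - max r (b + δ) ≤ a + δ - (b + δ) :=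
          sub_le_sub (by rw [max_eq_left hra]) (le_max_right _ _)
      _ = a - b := add_sub_add_right_eq_sub a b δ
      _ ≤ max (a - b) δ := le_max_left _ _
  · calc max a r + δ - max r (b + δ) ≤ r + δ - r :=
          sub_le_sub (by rw [max_eq_right har]) (le_max_left _ _)
      _ = δ := add_sub_cancel_left r δ
      _ ≤ max (a - b) δ := le_max_right _ _

theorem relocation_bound_general
    {α : Type*} (d : α → α → ℝ) (depot : α)
    (D : ℝ) (hD : ∀ i j : α, d i j ≤ D)
    (s : ℕ → α) (r : ℕ → ℝ)
    (doneStar doneA : ℕ → ℝ)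
    (hStar0 : doneStar 0 = max (d depot (s 0)) (r 0))
    (hStarS : ∀ k, doneStar (k + 1) =
      max (r (k + 1)) (doneStar k + d (s k) (s (k + 1))))
    (hA0 : doneA 0 = r 0 + d depot (s 0))
    (hAS : ∀ k, doneA (k + 1) =
      max (doneA k) (r (k + 1)) + d (s k) (s (k + 1))) :
    ∀ k, doneA k - doneStar k ≤ D := by
  intro k
  induction k with
  | zero =>
    rw [hA0, hStar0]
    linarith [le_max_right (d depot (s 0)) (r 0), hD depot (s 0)]
  | succ k ih =>
    rw [hAS, hStarS]
    exact (max_add_sub_max_le _ _ _ _).trans (max_le ih (hD _ _))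

/-- Relocation bound: along a fixed visiting sequence `s 0, s 1, ...` with
release times `r`, the no-relocation completion times `doneA` exceed the
anticipatory (CIOS) completion times `doneStar` by at most `D`, the maximum
distance between any two points of the space. -/
theorem relocation_bound
    {α : Type*} (d : α → α → ℝ) (depot : α)
    (hnn : ∀ i j : α, 0 ≤ d i j)
    (htri : ∀ i l s : α, d i s ≤ d i l + d l s)
    (D : ℝ) (hD : ∀ i j : α, d i j ≤ D)
    (s : ℕ → α) (r : ℕ → ℝ) (hr : ∀ k, 0 ≤ r k)
    (doneStar doneA : ℕ → ℝ)
    (hStar0 : doneStar 0 = max (d depot (s 0)) (r 0))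
    (hStarS : ∀ k, doneStar (k + 1) =
      max (r (k + 1)) (doneStar k + d (s k) (s (k + 1))))
    (hA0 : doneA 0 = r 0 + d depot (s 0))
    (hAS : ∀ k, doneA (k + 1) =
      max (doneA k) (r (k + 1)) + d (s k) (s (k + 1))) :
    ∀ k, doneA k - doneStar k ≤ D :=
  relocation_bound_general d depot D hD s r doneStar doneA hStar0 hStarS hA0 hAS
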